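/- (Replacing cycle edges preserves rooted spanning trees.) Let G be a connected multidigraph, σ a cycle in G, U_j a node of σ, e the edge of σ with source U_j, and τ a spanning tree of G rooted at U_j. Define τ̂ by replacing, for every node U_l ≠ U_j of σ, the unique edge of τ with source U_l by the edge of σ with source U_l. Then τ̂ is a spanning tree of G rooted at U_j that contains σ ∖ {e}, and hence τ̂ ∪ {e} ∈ Γ(σ). -/

import Mathlib

/-- A multidigraph: a set of nodes `V`, a set of edges `E`, and source/target maps. -/
structure Multidigraph (V E : Type*) where
  src : E → V
  tgt : E → V

namespace Multidigraph

variable {V E : Type*}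

/-- One-step edge relation using only the edges in `τ`. -/
def Rel (G : Multidigraph V E) (τ : Set E) (a b : V) : Prop :=
  ∃ e ∈ τ, G.src e = a ∧ G.tgt e = b

/-- Undirected (symmetrized) one-step relation. -/
def URel (G : Multidigraph V E) (a b : V) : Prop :=
  G.Rel Set.univ a b ∨ G.Rel Set.univ b a

/-- Node set of the (weakly) connected component containing `v`. -/
def component (G : Multidigraph V E) (v : V) : Set V :=
  {w | Relation.ReflTransGen G.URel v w}

/-- `τ` is a spanning tree of the subgraph of `G` induced on the node set `W`,
rooted at `r`: all edges stay inside `W`, every non-root node of `W` has exactly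
one outgoing edge in `τ`, the root has none, and every node of `W` reaches `r`
through `τ`. -/
def IsSpanningTreeOn (G : Multidigraph V E) (W : Set V) (τ : Finset E) (r : V) : Prop :=
  (∀ e ∈ τ, G.src e ∈ W ∧ G.tgt e ∈ W) ∧
  (∀ v ∈ W, v ≠ r → ∃! e, e ∈ τ ∧ G.src e = v) ∧
  (∀ e ∈ τ, G.src e ≠ r) ∧
  (∀ v ∈ W, Relation.ReflTransGen (G.Rel (τ : Set E)) v r)

/-- Spanning tree of `G` rooted at `r`. -/
def IsSpanningTree (G : Multidigraph V E) (τ : Finset E) (r : V) : Prop :=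
  G.IsSpanningTreeOn Set.univ τ r

/-- A cycle: a nonempty closed directed path with pairwise distinct nodes. -/
def IsCycle (G : Multidigraph V E) (l : List E) : Prop :=
  l ≠ [] ∧ (l.map G.src).Nodup ∧
  l.Chain' (fun a b => G.tgt a = G.src b) ∧
  ∀ h : l ≠ [], G.tgt (l.getLast h) = G.src (l.head h)

def StronglyConnected (G : Multidigraph V E) : Prop :=
  ∀ a b : V, Relation.ReflTransGen (G.Rel Set.univ) a b

def Connected (G : Multidigraph V E) : Prop :=
  ∀ a b : V, Relation.ReflTransGen G.URel a b

/-- Incidence matrix of a multidigraph. -/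
def incidence [DecidableEq V] (G : Multidigraph V E) : Matrix V E ℝ := fun v e =>
  if G.tgt e = v ∧ G.src e ≠ v then 1
  else if G.src e = v ∧ G.tgt e ≠ v then (-1 : ℝ) else 0

end Multidigraph

open scoped Classical

/-!
Only the sources of `σ ∖ {e}` change their outgoing edge, and each of them now reaches the
root `s(e)` by running forward along the cycle. Every other node follows its old `τ`-path
until it either reaches the root or meets a node of the cycle.
-/

namespace Multidigraph

variable {V E : Type*} {G : Multidigraph V E}

theorem Rel.mono {τ τ' : Set E} (h : τ ⊆ τ') : G.Rel τ ≤ G.Rel τ' :=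
  fun _ _ ⟨f, hf, hsrc, htgt⟩ => ⟨f, h hf, hsrc, htgt⟩

theorem reflTransGen_rel_mono {τ τ' : Set E} (h : τ ⊆ τ') {a b : V}
    (hab : Relation.ReflTransGen (G.Rel τ) a b) : Relation.ReflTransGen (G.Rel τ') a b :=
  Relation.ReflTransGen.mono (Rel.mono h) _ _ hab

theorem reflTransGen_src_of_isChain {l : List E} {g : E}
    (hl : (l ++ [g]).IsChain (fun a b => G.tgt a = G.src b)) :
    ∀ f ∈ l ++ [g], Relation.ReflTransGen (G.Rel {x | x ∈ l}) (G.src f) (G.src g) := by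
  induction l with
  | nil =>
    intro f hf
    rw [List.nil_append, List.mem_singleton] at hf
    exact hf ▸ .refl
  | cons a l ih =>
    obtain ⟨b, t, hbt⟩ := List.exists_cons_of_ne_nil (List.append_ne_nil_of_right_ne_nil l
      (List.cons_ne_nil g []))
    rw [List.cons_append, hbt, List.isChain_cons_cons, ← hbt] at hl
    have ih' : ∀ f ∈ l ++ [g],
        Relation.ReflTransGen (G.Rel {x | x ∈ a :: l}) (G.src f) (G.src g) :=
      fun f hf => reflTransGen_rel_mono (fun x hx => List.mem_cons_of_mem a hx) (ih hl.2 f hf)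
    intro f hf
    rcases List.mem_cons.1 hf with rfl | hf
    · have hb : b ∈ l ++ [g] := hbt ▸ List.mem_cons_self
      exact .head ⟨f, List.mem_cons_self, rfl, hl.1⟩ (ih' b hb)
    · exact ih' f hf

theorem IsCycle.isChain_append_self {σ : List E} (hσ : G.IsCycle σ) :
    (σ ++ σ).IsChain (fun a b => G.tgt a = G.src b) := by
  obtain ⟨hne, -, hchain, hclose⟩ := hσ
  refine List.isChain_append.2 ⟨hchain, hchain, fun x hx y hy => ?_⟩
  rw [List.getLast?_eq_some_getLast hne, Option.mem_some_iff] at hx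
  rw [List.head?_eq_some_head hne, Option.mem_some_iff] at hy
  exact hx ▸ hy ▸ hclose hne

theorem IsCycle.reflTransGen_src {σ : List E} (hσ : G.IsCycle σ) {e : E} (he : e ∈ σ) :
    ∀ f ∈ σ, Relation.ReflTransGen (G.Rel {x | x ∈ σ ∧ x ≠ e}) (G.src f) (G.src e) := by
  obtain ⟨l₁, l₂, rfl⟩ := List.append_of_mem he
  have hnodup : (l₁ ++ e :: l₂).Nodup := List.Nodup.of_map _ hσ.2.1
  -- the cycle read from just after `e` round to `e` again is a stretch of `σ ++ σ`
  have hpath : (l₂ ++ l₁ ++ [e]).IsChain (fun a b => G.tgt a = G.src b) :=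
    hσ.isChain_append_self.infix ⟨l₁ ++ [e], l₂, by simp⟩
  have hsub : {x | x ∈ l₂ ++ l₁} ⊆ {x | x ∈ l₁ ++ e :: l₂ ∧ x ≠ e} := by
    rintro x hx
    rw [List.nodup_middle, List.nodup_cons] at hnodup
    simp only [Set.mem_ofPred_eq, List.mem_append, List.mem_cons] at hx ⊢
    exact ⟨by tauto, by rintro rfl; exact hnodup.1 (by simp only [List.mem_append]; tauto)⟩
  intro f hf
  refine reflTransGen_rel_mono hsub (reflTransGen_src_of_isChain hpath f ?_)
  simp only [List.mem_append, List.mem_cons] at hf ⊢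
  tauto

theorem IsSpanningTree.graft {τ ρ τ' : Finset E} {r : V} {W : Set V}
    (hτ : G.IsSpanningTree τ r)
    (hsrc : ∀ f ∈ ρ, G.src f ∈ W ∧ G.src f ≠ r)
    (hinj : ∀ f ∈ ρ, ∀ g ∈ ρ, G.src f = G.src g → f = g)
    (hreach : ∀ v ∈ W, Relation.ReflTransGen (G.Rel (ρ : Set E)) v r)
    (hmem : ∀ f, f ∈ τ' ↔ (f ∈ τ ∧ G.src f ∉ W) ∨ f ∈ ρ) :
    G.IsSpanningTree τ' r := by
  obtain ⟨-, hτuniq, hτroot, hτreach⟩ := hτ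
  have hρ : (ρ : Set E) ⊆ τ' := fun f hf => (hmem f).2 (.inr hf)
  refine ⟨fun _ _ => ⟨trivial, trivial⟩, fun v _ hv => ?_, fun f hf => ?_, fun v _ => ?_⟩
  · by_cases hvW : v ∈ W
    · obtain ⟨-, ⟨f, hf, rfl, -⟩, -⟩ := ((hreach v hvW).cases_head).resolve_left hv
      refine ⟨f, ⟨hρ hf, rfl⟩, fun g ⟨hg, hgf⟩ => ?_⟩
      rcases (hmem g).1 hg with ⟨-, hgW⟩ | hg
      · exact absurd (hgf ▸ hvW) hgW
      · exact hinj g hg f hf hgf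
    · obtain ⟨f, ⟨hfτ, rfl⟩, hfu⟩ := hτuniq v trivial hv
      refine ⟨f, ⟨(hmem f).2 (.inl ⟨hfτ, hvW⟩), rfl⟩, fun g ⟨hg, hgf⟩ => ?_⟩
      rcases (hmem g).1 hg with ⟨hgτ, -⟩ | hg
      · exact hfu g ⟨hgτ, hgf⟩
      · exact absurd (hgf ▸ (hsrc g hg).1) hvW
  · rcases (hmem f).1 hf with ⟨hfτ, -⟩ | hfρ
    · exact hτroot f hfτ
    · exact (hsrc f hfρ).2
  · induction hτreach v trivial using Relation.ReflTransGen.head_induction_on with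
    | refl => exact .refl
    | @head u w huw _ ih =>
      by_cases huW : u ∈ W
      · exact reflTransGen_rel_mono hρ (hreach u huW)
      · obtain ⟨f, hf, rfl, rfl⟩ := huw
        exact .head ⟨f, (hmem f).2 (.inl ⟨hf, huW⟩), rfl, rfl⟩ (ih trivial)

end Multidigraph

theorem stmt19_general {V E : Type} [DecidableEq E]
    (G : Multidigraph V E)
    (σ : List E) (hσ : G.IsCycle σ) (e : E) (he : e ∈ σ)
    (τ : Finset E) (hτ : G.IsSpanningTree τ (G.src e))
    (τhat : Finset E)
    (hdef : τhat = (τ.filter (fun f => ¬ ∃ g ∈ σ, G.src g = G.src f)) ∪ σ.toFinset.erase e) :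
    G.IsSpanningTree τhat (G.src e) ∧
    (∀ f ∈ σ, f ≠ e → f ∈ τhat) ∧
    insert e τhat ∈
      {γ : Finset E | ∃ e' ∈ σ, ∃ τ' : Finset E,
        G.IsSpanningTree τ' (G.src e') ∧ (∀ f ∈ σ, f ≠ e' → f ∈ τ') ∧
        γ = insert e' τ'} := by
  have hinj := List.inj_on_of_nodup_map hσ.2.1
  have hcycle : ∀ f ∈ σ, f ≠ e → f ∈ τhat := fun f hf hfe => by
    subst hdef
    exact Finset.mem_union_right _ (Finset.mem_erase.2 ⟨hfe, List.mem_toFinset.2 hf⟩)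
  have hST : G.IsSpanningTree τhat (G.src e) := by
    refine hτ.graft (W := {v | ∃ g ∈ σ, G.src g = v}) (ρ := σ.toFinset.erase e)
      (fun f hf => ?_) (fun f hf g hg hfg => ?_) ?_ (fun f => ?_)
    · obtain ⟨hfe, hf⟩ := Finset.mem_erase.1 hf
      exact ⟨⟨f, List.mem_toFinset.1 hf, rfl⟩, fun h => hfe (hinj (List.mem_toFinset.1 hf) he h)⟩
    · simp only [Finset.mem_erase, List.mem_toFinset] at hf hg
      exact hinj hf.2 hg.2 hfg
    · rintro _ ⟨g, hg, rfl⟩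
      exact Multidigraph.reflTransGen_rel_mono (by intro x; simp) (hσ.reflTransGen_src he g hg)
    · subst hdef
      simp only [Finset.mem_union, Finset.mem_filter, Set.mem_ofPred_eq]
  exact ⟨hST, hcycle, e, he, τhat, hST, hcycle, rfl⟩

/-- Replacing cycle edges preserves rooted spanning trees:
replacing, for every node `U_l ≠ U_j` of the cycle `σ`, the unique edge of the
spanning tree `τ` (rooted at `U_j = s(e)`) with source `U_l` by the edge of
`σ` with source `U_l`, yields a spanning tree `τ̂` rooted at `U_j` containing
`σ ∖ {e}`; hence `τ̂ ∪ {e} ∈ Γ(σ)`. -/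
theorem stmt19 {V E : Type} [Fintype V] [Fintype E] [DecidableEq E]
    (G : Multidigraph V E) (hconn : G.Connected)
    (σ : List E) (hσ : G.IsCycle σ) (e : E) (he : e ∈ σ)
    (τ : Finset E) (hτ : G.IsSpanningTree τ (G.src e))
    (τhat : Finset E)
    (hdef : τhat = (τ.filter (fun f => ¬ ∃ g ∈ σ, G.src g = G.src f)) ∪ σ.toFinset.erase e) :
    G.IsSpanningTree τhat (G.src e) ∧
    (∀ f ∈ σ, f ≠ e → f ∈ τhat) ∧
    insert e τhat ∈
      {γ : Finset E | ∃ e' ∈ σ, ∃ τ' : Finset E,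
        G.IsSpanningTree τ' (G.src e') ∧ (∀ f ∈ σ, f ≠ e' → f ∈ τ') ∧
        γ = insert e' τ'} :=
  stmt19_general G σ hσ e he τ hτ τhat hdef
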